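/- Let d ≥ 1 be an integer, N ≥ 3 an odd integer, and T ≥ 1 a real number. Let T be a full binary tree with N nodes whose internal nodes have depths h_1, …, h_m with m = (N−1)/2. If N − 1 ≤ T and T ≥ ∑_{i=1}^{m} ( −1 + 2^{2h_i/d}/(2d) ), then N ≤ 1 + 8·(dT)^{d/(d+2)}. -/

import Mathlib

/-! Let the tree have `m` internal nodes, so `N = 2m + 1` and `2m ≤ T`, and put `β = 2 / d`. The
hypothesis bounds `S = ∑ᵢ 2 ^ (β hᵢ)` by `2d (T + m) ≤ 3dT`. At most `2 ^ h` internal nodes have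
depth `h`, so the `i`-th shallowest one satisfies `i + 1 ≤ 2 ^ (hᵢ + 1)`; comparing with an integral,
`S ≥ 2 ^ (-β) ∑_{i<m} (i + 1) ^ β ≥ m ^ (β + 1) / ((β + 1) 2 ^ β)`. Hence
`m ^ (β + 1) ≤ 3 (β + 1) 2 ^ β dT ≤ 4 ^ (β + 1) dT`, i.e. `m ≤ 4 (dT) ^ (d / (d + 2))`. -/

/-- A full binary tree: every node has either exactly two children or none. -/
inductive FullBinaryTree : Type
  | leaf : FullBinaryTree
  | node : FullBinaryTree → FullBinaryTree → FullBinaryTree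

namespace FullBinaryTree

/-- Total number of nodes. -/
def numNodes : FullBinaryTree → ℕ
  | leaf => 1
  | node l r => 1 + l.numNodes + r.numNodes

/-- Number of internal nodes (nodes with two children) at depth `h`
(the depth of a node is its distance to the root). -/
def internalCount : FullBinaryTree → ℕ → ℕ
  | leaf, _ => 0
  | node _ _, 0 => 1
  | node l r, h + 1 => l.internalCount h + r.internalCount h

end FullBinaryTree

open Finset Real

namespace FullBinaryTree

def numInternal : FullBinaryTree → ℕ
  | leaf => 0
  | node l r => l.numInternal + r.numInternal + 1

theorem numNodes_eq_two_mul_numInternal_add_one :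
    ∀ t : FullBinaryTree, t.numNodes = 2 * t.numInternal + 1
  | leaf => rfl
  | node l r => by
    simp only [numNodes, numInternal, numNodes_eq_two_mul_numInternal_add_one l,
      numNodes_eq_two_mul_numInternal_add_one r]
    ring

theorem internalCount_le_two_pow : ∀ (t : FullBinaryTree) (h : ℕ), t.internalCount h ≤ 2 ^ h
  | leaf, _ => Nat.zero_le _
  | node _ _, 0 => le_rfl
  | node l r, h + 1 => by
    rw [internalCount, pow_succ]
    linarith [internalCount_le_two_pow l h, internalCount_le_two_pow r h]

theorem internalCount_eq_zero_of_numNodes_le :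
    ∀ (t : FullBinaryTree) (h : ℕ), t.numNodes ≤ h → t.internalCount h = 0
  | leaf, _, _ => rfl
  | node l r, 0, hh => by simp [numNodes] at hh
  | node l r, h + 1, hh => by
    rw [numNodes] at hh
    rw [internalCount, internalCount_eq_zero_of_numNodes_le l h (by omega),
      internalCount_eq_zero_of_numNodes_le r h (by omega)]

theorem sum_internalCount_eq_numInternal :
    ∀ (t : FullBinaryTree) (n : ℕ), t.numNodes ≤ n →
      ∑ h ∈ range n, t.internalCount h = t.numInternal
  | leaf, n, _ => by simp [internalCount, numInternal]
  | node l r, 0, hn => by simp [numNodes] at hn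
  | node l r, n + 1, hn => by
    rw [numNodes] at hn
    simp only [sum_range_succ', internalCount, sum_add_distrib, numInternal,
      sum_internalCount_eq_numInternal l n (by omega),
      sum_internalCount_eq_numInternal r n (by omega)]

theorem tsum_internalCount_mul (t : FullBinaryTree) (f : ℕ → ℝ) :
    ∑' h, (t.internalCount h : ℝ) * f h = ∑ h ∈ range t.numNodes, (t.internalCount h : ℝ) * f h :=
  tsum_eq_sum fun h hh => by
    rw [internalCount_eq_zero_of_numNodes_le t h (by simpa using hh), Nat.cast_zero, zero_mul]

theorem tsum_internalCount_mul_neg_one_add (t : FullBinaryTree) (f : ℕ → ℝ) :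
    ∑' h, (t.internalCount h : ℝ) * (-1 + f h) =
      -t.numInternal + ∑' h, (t.internalCount h : ℝ) * f h := by
  rw [tsum_internalCount_mul, tsum_internalCount_mul]
  simp only [mul_add, mul_neg_one, sum_add_distrib, sum_neg_distrib, ← Nat.cast_sum,
    sum_internalCount_eq_numInternal t _ le_rfl]

end FullBinaryTree

/-- Listing items level by level, with at most `2 ^ h` items on level `h`, the `i`-th item
(counted from `1`) lies on a level `h` with `i < 2 ^ (h + 1)`. -/
theorem sum_range_sum_le_sum_mul_of_le_two_pow {c : ℕ → ℕ} (hc : ∀ h, c h ≤ 2 ^ h)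
    {g : ℕ → ℝ} (hg : Monotone g) (n : ℕ) :
    ∑ i ∈ range (∑ h ∈ range n, c h), g (i + 1) ≤ ∑ h ∈ range n, c h * g (2 ^ (h + 1)) := by
  induction n with
  | zero => simp
  | succ n ih =>
    set M := ∑ h ∈ range n, c h
    have hM : M < 2 ^ n :=
      (sum_le_sum fun h _ => hc h).trans_lt (Nat.geomSum_lt le_rfl fun _ => mem_range.mp)
    have hlevel : ∑ i ∈ Ico M (M + c n), g (i + 1) ≤ c n * g (2 ^ (n + 1)) := by
      calc ∑ i ∈ Ico M (M + c n), g (i + 1) ≤ ∑ _i ∈ Ico M (M + c n), g (2 ^ (n + 1)) :=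
            sum_le_sum fun i hi => hg (by rw [mem_Ico] at hi; have := hc n; rw [pow_succ]; omega)
        _ = c n * g (2 ^ (n + 1)) := by simp
    rw [sum_range_succ, sum_range_succ, ← sum_range_add_sum_Ico _ (M.le_add_right (c n))]
    exact add_le_add ih hlevel

theorem rpow_add_one_div_le_sum_rpow {β : ℝ} (hβ : 0 ≤ β) (m : ℕ) :
    (m : ℝ) ^ (β + 1) / (β + 1) ≤ ∑ i ∈ range m, ((i : ℝ) + 1) ^ β := by
  have hmono : MonotoneOn (fun x : ℝ => x ^ β) (Set.Icc 0 (0 + m)) :=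
    fun x hx y _ hxy => rpow_le_rpow hx.1 hxy hβ
  have h := hmono.integral_le_sum
  rw [zero_add, integral_rpow (Or.inl (by linarith)),
    zero_rpow (by linarith), sub_zero] at h
  simpa [add_comm] using h

theorem add_one_mul_two_rpow_mul_three_le_four_rpow {β : ℝ} (hβ₀ : 0 ≤ β) (hβ₂ : β ≤ 2) :
    (β + 1) * 2 ^ β * 3 ≤ (4 : ℝ) ^ (β + 1) := by
  have htangent : 1 + log 2 * β ≤ (2 : ℝ) ^ β := by
    rw [rpow_def_of_pos two_pos, add_comm]
    exact add_one_le_exp _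
  have hlinear : (β + 1) * 3 ≤ 4 * (2 : ℝ) ^ β := by nlinarith [log_two_gt_d9]
  rw [rpow_add_one four_ne_zero, show (4 : ℝ) = 2 * 2 by norm_num, mul_rpow zero_le_two zero_le_two]
  nlinarith [mul_le_mul_of_nonneg_left hlinear (rpow_nonneg zero_le_two β)]

theorem le_mul_rpow_inv_of_rpow_le {x a y p : ℝ} (hx : 0 ≤ x) (ha : 0 ≤ a) (hy : 0 ≤ y)
    (hp : 0 < p) (h : x ^ p ≤ a ^ p * y) : x ≤ a * y ^ p⁻¹ := by
  calc x = (x ^ p) ^ p⁻¹ := (rpow_rpow_inv hx hp.ne').symm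
    _ ≤ (a ^ p * y) ^ p⁻¹ := rpow_le_rpow (by positivity) h (by positivity)
    _ = a * y ^ p⁻¹ := by rw [mul_rpow (by positivity) hy, rpow_rpow_inv ha hp.ne']

namespace FullBinaryTree

theorem numInternal_rpow_le {β : ℝ} (hβ : 0 ≤ β) (t : FullBinaryTree) :
    (t.numInternal : ℝ) ^ (β + 1) ≤
      (β + 1) * 2 ^ β * ∑' h, (t.internalCount h : ℝ) * 2 ^ (β * h) := by
  have hg : Monotone fun k : ℕ => (k : ℝ) ^ β :=
    fun _ _ hkl => rpow_le_rpow (Nat.cast_nonneg _) (Nat.cast_le.mpr hkl) hβ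
  have hdepth := sum_range_sum_le_sum_mul_of_le_two_pow t.internalCount_le_two_pow hg t.numNodes
  have hpow : ∀ h : ℕ, (((2 ^ (h + 1) : ℕ) : ℝ) ^ β) = 2 ^ β * 2 ^ (β * h) := fun h => by
    rw [Nat.cast_pow, Nat.cast_ofNat, ← rpow_natCast, ← rpow_mul zero_le_two, ← rpow_add two_pos]
    push_cast
    ring_nf
  simp only [hpow, sum_internalCount_eq_numInternal t _ le_rfl, Nat.cast_add, Nat.cast_one,
    mul_left_comm _ ((2 : ℝ) ^ β), ← mul_sum] at hdepth
  calc (t.numInternal : ℝ) ^ (β + 1)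
      ≤ (β + 1) * ∑ i ∈ range t.numInternal, ((i : ℝ) + 1) ^ β := by
        rw [← div_le_iff₀' (by linarith)]
        exact rpow_add_one_div_le_sum_rpow hβ _
    _ ≤ _ := by
        rw [tsum_internalCount_mul, mul_assoc]
        gcongr

end FullBinaryTree

theorem stmt_8_general (d : ℕ) (hd : 1 ≤ d) (N : ℕ)
    (T : ℝ)
    (t : FullBinaryTree) (ht : t.numNodes = N)
    (h1 : (N : ℝ) - 1 ≤ T)
    (h2 : ∑' h : ℕ, (t.internalCount h : ℝ) *
        (-1 + (2 : ℝ) ^ (2 * (h : ℝ) / (d : ℝ)) / (2 * (d : ℝ))) ≤ T) :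
    (N : ℝ) ≤ 1 + 8 * ((d : ℝ) * T) ^ ((d : ℝ) / ((d : ℝ) + 2)) := by
  set m : ℕ := t.numInternal
  have hNm : (N : ℝ) = 2 * m + 1 := by
    rw [← ht, t.numNodes_eq_two_mul_numInternal_add_one]
    push_cast
    ring
  have hd' : (1 : ℝ) ≤ d := by exact_mod_cast hd
  set β : ℝ := 2 / d
  have hβ₀ : 0 ≤ β := by positivity
  have hβ₂ : β ≤ 2 := div_le_self zero_le_two hd'
  have hdT : 0 ≤ (d : ℝ) * T := mul_nonneg (by positivity) (by linarith [m.cast_nonneg (α := ℝ)])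
  set S := ∑' h, (t.internalCount h : ℝ) * 2 ^ (β * h)
  have hS : S ≤ 3 * (d * T) := by
    rw [t.tsum_internalCount_mul_neg_one_add] at h2
    simp_rw [← mul_div_assoc, mul_div_right_comm (2 : ℝ)] at h2
    rw [tsum_div_const] at h2
    change -(m : ℝ) + S / (2 * d) ≤ T at h2
    rw [neg_add_le_iff_le_add, div_le_iff₀ (by positivity)] at h2
    nlinarith
  have hm : (m : ℝ) ^ (β + 1) ≤ 4 ^ (β + 1) * (d * T) := calc
    _ ≤ (β + 1) * 2 ^ β * S := t.numInternal_rpow_le hβ₀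
    _ ≤ (β + 1) * 2 ^ β * (3 * (d * T)) := by gcongr
    _ ≤ 4 ^ (β + 1) * (d * T) := by
      rw [← mul_assoc]
      gcongr
      exact add_one_mul_two_rpow_mul_three_le_four_rpow hβ₀ hβ₂
  have hexp : (β + 1)⁻¹ = d / (d + 2) := by
    rw [div_add_one (by positivity), inv_div, add_comm]
  have hm' := le_mul_rpow_inv_of_rpow_le m.cast_nonneg zero_le_four hdT (by positivity) hm
  rw [hexp] at hm'
  linarith

/-- Combinatorial core of Lemma 3: if a full binary tree with `N` nodes (`N ≥ 3` odd)
satisfies `N - 1 ≤ T` and `∑_{internal nodes} (-1 + 2^{2h/d}/(2d)) ≤ T`, where the sum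
runs over the internal nodes and `h` denotes their depths, then
`N ≤ 1 + 8 (dT)^{d/(d+2)}`. -/
theorem stmt_8 (d : ℕ) (hd : 1 ≤ d) (N : ℕ) (hN : 3 ≤ N) (hodd : Odd N)
    (T : ℝ) (hT : 1 ≤ T)
    (t : FullBinaryTree) (ht : t.numNodes = N)
    (h1 : (N : ℝ) - 1 ≤ T)
    (h2 : ∑' h : ℕ, (t.internalCount h : ℝ) *
        (-1 + (2 : ℝ) ^ (2 * (h : ℝ) / (d : ℝ)) / (2 * (d : ℝ))) ≤ T) :
    (N : ℝ) ≤ 1 + 8 * ((d : ℝ) * T) ^ ((d : ℝ) / ((d : ℝ) + 2)) :=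
  stmt_8_general d hd N T t ht h1 h2
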